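/- arXiv:1902.08392 — 6 statements merged into one kernel-verified Lean document; each statement's English description precedes it below -/
import Mathlib

section
/- For the function f defined by f'(t) = 1/√(1+2f(t)²), f(0)=0, extended oddly, one has (1/2)f(t) ≤ t·f'(t) ≤ f(t) for all t ≥ 0. -/
/-! The derivative of `F = f · √(1 + 2f²)` is `(1 + 4f²)/(1 + 2f²) ∈ [1, 2]` on `t ≥ 0`, so
`F(0) = 0` gives `t ≤ F(t) ≤ 2t`. Since `t f'(t) = t / √(1 + 2f²)` and `f = F / √(1 + 2f²)`, this is
exactly `f(t)/2 ≤ t f'(t) ≤ f(t)`. -/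

open Set

theorem mul_sub_le_sub_le_mul_sub_of_hasDerivAt_mem_Icc {G G' : ℝ → ℝ} {a b s t : ℝ}
    (hG : ∀ x, s ≤ x → HasDerivAt G (G' x) x) (hG' : ∀ x, s ≤ x → G' x ∈ Icc a b)
    (hst : s ≤ t) : a * (t - s) ≤ G t - G s ∧ G t - G s ≤ b * (t - s) := by
  have hcont : ContinuousOn G (Ici s) := fun x hx => (hG x hx).continuousAt.continuousWithinAt
  have hdiff : DifferentiableOn ℝ G (interior (Ici s)) := fun x hx =>
    (hG x (le_of_lt (by simpa using hx))).differentiableAt.differentiableWithinAt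
  have hderiv : ∀ x ∈ interior (Ici s), deriv G x ∈ Icc a b := fun x hx => by
    rw [interior_Ici] at hx
    exact (hG x hx.out.le).deriv ▸ hG' x hx.out.le
  exact ⟨(convex_Ici s).mul_sub_le_image_sub_of_le_deriv hcont hdiff
      (fun x hx => (hderiv x hx).1) s self_mem_Ici t hst hst,
    (convex_Ici s).image_sub_le_mul_sub_of_deriv_le hcont hdiff
      (fun x hx => (hderiv x hx).2) s self_mem_Ici t hst hst⟩

theorem HasDerivAt.mul_sqrt_one_add_two_mul_sq {f : ℝ → ℝ} {x : ℝ}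
    (hf : HasDerivAt f (1 / √(1 + 2 * f x ^ 2)) x) :
    HasDerivAt (fun y => f y * √(1 + 2 * f y ^ 2))
      ((1 + 4 * f x ^ 2) / (1 + 2 * f x ^ 2)) x := by
  have hpos : 0 < 1 + 2 * f x ^ 2 := by positivity
  have hsq : √(1 + 2 * f x ^ 2) ^ 2 = 1 + 2 * f x ^ 2 := Real.sq_sqrt hpos.le
  refine (hf.fun_mul ((((hf.fun_pow 2).const_mul 2).const_add 1).sqrt hpos.ne')).congr_deriv ?_
  field_simp
  rw [hsq]
  push_cast
  ring

theorem one_add_four_mul_sq_div_one_add_two_mul_sq_mem_Icc (u : ℝ) :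
    (1 + 4 * u ^ 2) / (1 + 2 * u ^ 2) ∈ Icc 1 2 := by
  have hpos : 0 < 1 + 2 * u ^ 2 := by positivity
  constructor
  · rw [le_div_iff₀ hpos]; nlinarith
  · rw [div_le_iff₀ hpos]; nlinarith

theorem stmt_3_general (f : ℝ → ℝ) (hf0 : f 0 = 0)
    (hderiv : ∀ t : ℝ, 0 ≤ t → HasDerivAt f (1 / Real.sqrt (1 + 2 * f t ^ 2)) t) :
    ∀ t : ℝ, 0 ≤ t → (1 / 2) * f t ≤ t * deriv f t ∧ t * deriv f t ≤ f t := by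
  intro t ht
  obtain ⟨hlow, hupp⟩ := mul_sub_le_sub_le_mul_sub_of_hasDerivAt_mem_Icc
    (fun x hx => (hderiv x hx).mul_sqrt_one_add_two_mul_sq)
    (fun x _ => one_add_four_mul_sq_div_one_add_two_mul_sq_mem_Icc (f x)) ht
  simp only [hf0, sub_zero, zero_mul, one_mul] at hlow hupp
  have hsqrt_pos : 0 < √(1 + 2 * f t ^ 2) := Real.sqrt_pos.2 (by positivity)
  rw [(hderiv t ht).deriv, mul_one_div]
  constructor
  · rw [le_div_iff₀ hsqrt_pos]; linarith
  · rw [div_le_iff₀ hsqrt_pos]; linarith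

theorem stmt_3 (f : ℝ → ℝ) (hf0 : f 0 = 0)
    (hodd : ∀ t : ℝ, f (-t) = -f t)
    (hderiv : ∀ t : ℝ, 0 ≤ t → HasDerivAt f (1 / Real.sqrt (1 + 2 * f t ^ 2)) t) :
    ∀ t : ℝ, 0 ≤ t → (1 / 2) * f t ≤ t * deriv f t ∧ t * deriv f t ≤ f t :=
  stmt_3_general f hf0 hderiv
end

section
/- For the function f defined by f'(t) = 1/√(1+2f(t)²), f(0)=0, extended oddly, one has |f(t)| ≤ 2^{1/4}·|t|^{1/2} for all t ∈ ℝ. -/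
/-!
Since `(f²)' = 2f/√(1 + 2f²) ≤ √2` on `[0, ∞)` and `f 0 = 0`, the mean value inequality gives
`f(t)² ≤ √2 t` for `t ≥ 0`; taking square roots gives the bound there, and oddness of `f` carries
it over to `t < 0`.
-/

open Real

lemma Function.Odd.abs_apply_abs {α β : Type*} [AddGroup α] [LinearOrder α] [AddGroup β]
    [Lattice β] {f : α → β} (hf : f.Odd) (t : α) : |f (|t|)| = |f t| := by
  rcases abs_choice t with h | h <;> rw [h]
  rw [hf.eq, abs_neg]

lemma two_mul_mul_one_div_sqrt_one_add_two_mul_sq_le (y : ℝ) :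
    2 * y * (1 / √(1 + 2 * y ^ 2)) ≤ √2 := by
  rw [mul_one_div, div_le_iff₀ (by positivity), ← sqrt_mul zero_le_two]
  exact (le_abs_self _).trans (abs_le_sqrt (by nlinarith))

lemma sq_le_mul_of_hasDerivAt {f f' : ℝ → ℝ} {c : ℝ} (h0 : f 0 = 0)
    (hf : ∀ x, 0 ≤ x → HasDerivAt f (f' x) x) (hbound : ∀ x, 0 < x → 2 * f x * f' x ≤ c)
    {t : ℝ} (ht : 0 ≤ t) : f t ^ 2 ≤ c * t := by
  have hG : ∀ x, 0 ≤ x → HasDerivAt (fun s ↦ c * s - f s ^ 2) (c - 2 * f x * f' x) x :=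
    fun x hx ↦ (((hasDerivAt_id' x).const_mul c).sub ((hf x hx).pow 2)).congr_deriv (by ring)
  have hmono : MonotoneOn (fun s ↦ c * s - f s ^ 2) (Set.Ici 0) := by
    refine monotoneOn_of_hasDerivWithinAt_nonneg (convex_Ici 0)
      (fun x hx ↦ (hG x hx).continuousAt.continuousWithinAt)
      (fun x hx ↦ (hG x (interior_subset hx)).hasDerivWithinAt) fun x hx ↦ ?_
    rw [interior_Ici] at hx
    linarith [hbound x hx]
  have h0t := hmono Set.self_mem_Ici ht ht
  simp only [mul_zero, h0] at h0t
  linarith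

lemma abs_le_two_rpow_mul_rpow_of_sq_le {y t : ℝ} (h : y ^ 2 ≤ √2 * t) :
    |y| ≤ (2 : ℝ) ^ ((1 : ℝ) / 4) * t ^ ((1 : ℝ) / 2) := by
  have hsqrt : √(√2) = (2 : ℝ) ^ ((1 : ℝ) / 4) := by
    rw [sqrt_eq_rpow, sqrt_eq_rpow, ← rpow_mul zero_le_two]
    norm_num
  calc |y| ≤ √(√2 * t) := abs_le_sqrt h
    _ = (2 : ℝ) ^ ((1 : ℝ) / 4) * t ^ ((1 : ℝ) / 2) := by
      rw [sqrt_mul (sqrt_nonneg 2), hsqrt, sqrt_eq_rpow]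

theorem stmt_4_general (f : ℝ → ℝ)
    (hodd : ∀ t : ℝ, f (-t) = -f t)
    (hderiv : ∀ t : ℝ, 0 ≤ t → HasDerivAt f (1 / Real.sqrt (1 + 2 * f t ^ 2)) t) :
    ∀ t : ℝ, |f t| ≤ (2 : ℝ) ^ ((1 : ℝ) / 4) * |t| ^ ((1 : ℝ) / 2) := by
  have hodd : f.Odd := hodd
  intro t
  rw [← hodd.abs_apply_abs]
  exact abs_le_two_rpow_mul_rpow_of_sq_le (sq_le_mul_of_hasDerivAt hodd.map_zero hderiv
    (fun x _ ↦ two_mul_mul_one_div_sqrt_one_add_two_mul_sq_le (f x)) (abs_nonneg t))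

theorem stmt_4 (f : ℝ → ℝ) (hf0 : f 0 = 0)
    (hodd : ∀ t : ℝ, f (-t) = -f t)
    (hderiv : ∀ t : ℝ, 0 ≤ t → HasDerivAt f (1 / Real.sqrt (1 + 2 * f t ^ 2)) t) :
    ∀ t : ℝ, |f t| ≤ (2 : ℝ) ^ ((1 : ℝ) / 4) * |t| ^ ((1 : ℝ) / 2) :=
  stmt_4_general f hodd hderiv
end

section
/- For the function f defined by f'(t) = 1/√(1+2f(t)²), f(0)=0, extended oddly, there exists a constant C > 0 such that |f(t)| ≥ C|t| for |t| ≤ 1 and |f(t)| ≥ C|t|^{1/2} for |t| ≥ 1. -/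
/-!
On `t ≥ 0` the right-hand side `1 / √(1 + 2 f²)` lies in `(0, 1]`, so `f` is increasing
with `0 ≤ f t ≤ t`. On `[0, 1]` this gives `f ≤ 1`, hence `f' ≥ 1 / √3` and `f t ≥ t / √3`.
For `t ≥ 1` we have `f ≥ f 1 ≥ 1 / √3`, which makes `(f²)' = 2 f / √(1 + 2 f²) ≥ 1 / 3`,
hence `f t ^ 2 ≥ t / 3`. Oddness transfers both bounds to `t ≤ 0`, with `C = 1 / √3`.
-/

open Set

lemma mul_sub_le_sub_of_hasDerivAt {g g' : ℝ → ℝ} {a b C : ℝ} (hab : a ≤ b)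
    (hg : ∀ t ∈ Icc a b, HasDerivAt g (g' t) t) (hC : ∀ t ∈ Ioo a b, C ≤ g' t) :
    C * (b - a) ≤ g b - g a := by
  refine (convex_Icc a b).mul_sub_le_image_sub_of_le_deriv
    (fun t ht => (hg t ht).continuousAt.continuousWithinAt)
    (fun t ht => (hg t (interior_subset ht)).differentiableAt.differentiableWithinAt)
    (fun t ht => ?_) a (left_mem_Icc.2 hab) b (right_mem_Icc.2 hab) hab
  rw [interior_Icc] at ht
  rw [(hg t (Ioo_subset_Icc_self ht)).deriv]
  exact hC t ht

lemma sub_le_mul_sub_of_hasDerivAt {g g' : ℝ → ℝ} {a b C : ℝ} (hab : a ≤ b)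
    (hg : ∀ t ∈ Icc a b, HasDerivAt g (g' t) t) (hC : ∀ t ∈ Ioo a b, g' t ≤ C) :
    g b - g a ≤ C * (b - a) := by
  have := mul_sub_le_sub_of_hasDerivAt (g := fun t => -g t) hab (fun t ht => (hg t ht).neg)
    (fun t ht => neg_le_neg (hC t ht))
  linarith

lemma one_div_sqrt_one_add_two_mul_sq_le_one (y : ℝ) : 1 / √(1 + 2 * y ^ 2) ≤ 1 := by
  rw [div_le_one (by positivity), Real.one_le_sqrt]
  nlinarith [sq_nonneg y]

lemma one_div_sqrt_three_le_one_div_sqrt_one_add_two_mul_sq {y : ℝ} (hy : |y| ≤ 1) :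
    1 / √3 ≤ 1 / √(1 + 2 * y ^ 2) := by
  gcongr
  nlinarith [sq_le_one_iff_abs_le_one y |>.2 hy]

lemma one_third_le_two_mul_div_sqrt_one_add_two_mul_sq {y : ℝ} (hy : 0 ≤ y)
    (hy2 : 1 / 3 ≤ y ^ 2) : 1 / 3 ≤ 2 * y * (1 / √(1 + 2 * y ^ 2)) := by
  have hsqrt : √(1 + 2 * y ^ 2) ≤ 6 * y :=
    Real.sqrt_le_iff.2 ⟨by positivity, by nlinarith⟩
  rw [mul_one_div, le_div_iff₀ (by positivity)]
  linarith

section ODE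

variable {f : ℝ → ℝ}
  (hderiv : ∀ t : ℝ, 0 ≤ t → HasDerivAt f (1 / √(1 + 2 * f t ^ 2)) t)
include hderiv

lemma monotoneOn_Ici_of_ode : MonotoneOn f (Ici 0) := by
  intro x hx y _ hxy
  have := mul_sub_le_sub_of_hasDerivAt (C := 0) hxy
    (fun t ht => hderiv t (le_trans hx ht.1))
    (fun t _ => by positivity)
  linarith

variable (hf0 : f 0 = 0)
include hf0

lemma nonneg_of_ode {t : ℝ} (ht : 0 ≤ t) : 0 ≤ f t :=
  hf0 ▸ monotoneOn_Ici_of_ode hderiv self_mem_Ici ht ht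

lemma le_self_of_ode {t : ℝ} (ht : 0 ≤ t) : f t ≤ t := by
  have := sub_le_mul_sub_of_hasDerivAt (C := 1) ht (fun s hs => hderiv s hs.1)
    (fun s _ => one_div_sqrt_one_add_two_mul_sq_le_one _)
  linarith

lemma div_sqrt_three_le_of_ode {t : ℝ} (ht0 : 0 ≤ t) (ht1 : t ≤ 1) : t / √3 ≤ f t := by
  have := mul_sub_le_sub_of_hasDerivAt ht0 (fun s hs => hderiv s hs.1) fun s hs => by
    refine one_div_sqrt_three_le_one_div_sqrt_one_add_two_mul_sq ?_
    rw [abs_of_nonneg (nonneg_of_ode hderiv hf0 hs.1.le)]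
    linarith [le_self_of_ode hderiv hf0 hs.1.le, hs.2]
  rw [hf0, sub_zero, sub_zero] at this
  rwa [div_eq_inv_mul, ← one_div]

lemma div_three_le_sq_of_ode {t : ℝ} (ht : 1 ≤ t) : t / 3 ≤ f t ^ 2 := by
  have hf1 : 1 / √3 ≤ f 1 := by
    simpa using div_sqrt_three_le_of_ode hderiv hf0 zero_le_one le_rfl
  have hsq : ∀ s, 1 ≤ s → 1 / 3 ≤ f s ^ 2 := fun s hs => by
    have hfs := hf1.trans <|
      monotoneOn_Ici_of_ode hderiv (mem_Ici.2 zero_le_one) (mem_Ici.2 (by linarith)) hs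
    calc 1 / 3 = (1 / √3) ^ 2 := by rw [div_pow, Real.sq_sqrt zero_le_three, one_pow]
      _ ≤ f s ^ 2 := by gcongr
  have := mul_sub_le_sub_of_hasDerivAt (C := 1 / 3) ht
    (fun s hs => by simpa using (hderiv s (by linarith [hs.1])).fun_pow 2)
    (fun s hs => one_third_le_two_mul_div_sqrt_one_add_two_mul_sq
      (nonneg_of_ode hderiv hf0 (by linarith [hs.1])) (hsq s hs.1.le))
  linarith [hsq 1 le_rfl]

end ODE

lemma abs_apply_eq_apply_abs_of_odd {f : ℝ → ℝ} (hodd : ∀ t, f (-t) = -f t)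
    (hnonneg : ∀ t, 0 ≤ t → 0 ≤ f t) (t : ℝ) : |f t| = f |t| := by
  rcases le_total 0 t with ht | ht
  · rw [abs_of_nonneg ht, abs_of_nonneg (hnonneg t ht)]
  · rw [abs_of_nonpos ht, ← abs_neg, ← hodd, abs_of_nonneg (hnonneg _ (neg_nonneg.2 ht))]

theorem stmt_5 (f : ℝ → ℝ) (hf0 : f 0 = 0)
    (hodd : ∀ t : ℝ, f (-t) = -f t)
    (hderiv : ∀ t : ℝ, 0 ≤ t → HasDerivAt f (1 / Real.sqrt (1 + 2 * f t ^ 2)) t) :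
    ∃ C : ℝ, 0 < C ∧
      (∀ t : ℝ, |t| ≤ 1 → C * |t| ≤ |f t|) ∧
      (∀ t : ℝ, 1 ≤ |t| → C * |t| ^ ((1 : ℝ) / 2) ≤ |f t|) := by
  have habs := abs_apply_eq_apply_abs_of_odd hodd fun t => nonneg_of_ode hderiv hf0
  refine ⟨1 / √3, by positivity, fun t ht => ?_, fun t ht => ?_⟩
  · rw [habs, one_div_mul_eq_div]
    exact div_sqrt_three_le_of_ode hderiv hf0 (abs_nonneg t) ht
  · have hf := nonneg_of_ode hderiv hf0 (abs_nonneg t)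
    calc 1 / √3 * |t| ^ ((1 : ℝ) / 2) = √(|t| / 3) := by
          rw [← Real.sqrt_eq_rpow, Real.sqrt_div (abs_nonneg t)]; ring
      _ ≤ √(f |t| ^ 2) := Real.sqrt_le_sqrt (div_three_le_sq_of_ode hderiv hf0 ht)
      _ = |f t| := by rw [Real.sqrt_sq hf, habs]
end

section
/- For the function f defined by f'(t) = 1/√(1+2f(t)²), f(0)=0, extended oddly, one has |f(t)·f'(t)| ≤ 1/√2 for all t ∈ ℝ. -/
/-! The derivative of an odd function is even, so the differential equation, imposed only on
`t ≥ 0`, holds on all of `ℝ`. Hence `f t * f' t = a / √(1 + 2a²)` with `a = f t`, and this is at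
most `1/√2` in absolute value because `√2 |a| = √(2a²) ≤ √(1 + 2a²)`. -/

theorem HasDerivAt.of_neg_of_odd {𝕜 F : Type*} [NontriviallyNormedField 𝕜] [NormedAddCommGroup F]
    [NormedSpace 𝕜 F] {f : 𝕜 → F} {f' : F} {x : 𝕜} (hodd : ∀ y, f (-y) = -f y)
    (h : HasDerivAt f f' (-x)) : HasDerivAt f f' x := by
  have hf : (fun y => -f (-y)) = f := funext fun y => by rw [hodd, neg_neg]
  simpa [Function.comp_def, hf] using (h.scomp x (hasDerivAt_neg x)).fun_neg

theorem abs_mul_one_div_sqrt_one_add_two_mul_sq_le (a : ℝ) :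
    |a * (1 / √(1 + 2 * a ^ 2))| ≤ 1 / √2 := by
  have hpos : 0 < √(1 + 2 * a ^ 2) := Real.sqrt_pos.mpr (by positivity)
  have hbound : √2 * |a| ≤ √(1 + 2 * a ^ 2) := by
    calc √2 * |a| = √(2 * a ^ 2) := by
          rw [Real.sqrt_mul zero_le_two, Real.sqrt_sq_eq_abs]
      _ ≤ √(1 + 2 * a ^ 2) := Real.sqrt_le_sqrt (by linarith)
  rw [abs_mul, abs_of_pos (one_div_pos.mpr hpos), mul_one_div,
    div_le_div_iff₀ hpos (by positivity)]
  linarith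

theorem stmt_6_general (f : ℝ → ℝ)
    (hodd : ∀ t : ℝ, f (-t) = -f t)
    (hderiv : ∀ t : ℝ, 0 ≤ t → HasDerivAt f (1 / Real.sqrt (1 + 2 * f t ^ 2)) t) :
    ∀ t : ℝ, |f t * deriv f t| ≤ 1 / Real.sqrt 2 := by
  have hderiv_all : ∀ t : ℝ, HasDerivAt f (1 / √(1 + 2 * f t ^ 2)) t := by
    intro t
    rcases le_or_gt 0 t with ht | ht
    · exact hderiv t ht
    · have hneg := hderiv (-t) (by linarith)
      rw [hodd, neg_sq] at hneg
      exact hneg.of_neg_of_odd hodd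
  intro t
  rw [(hderiv_all t).deriv]
  exact abs_mul_one_div_sqrt_one_add_two_mul_sq_le (f t)

theorem stmt_6 (f : ℝ → ℝ) (hf0 : f 0 = 0)
    (hodd : ∀ t : ℝ, f (-t) = -f t)
    (hderiv : ∀ t : ℝ, 0 ≤ t → HasDerivAt f (1 / Real.sqrt (1 + 2 * f t ^ 2)) t) :
    ∀ t : ℝ, |f t * deriv f t| ≤ 1 / Real.sqrt 2 :=
  stmt_6_general f hodd hderiv
end

section
/- Let N ≥ 3, 0 < α < N, and 2(N+α)/N ≤ p ≤ 2(N+α)/(N-2). Then there exist C > 0 and r ∈ [2, 2N/(N-2)) such that |f(t)|^p ≤ C·t^r and |f(t)|^{p-2}·f(t)·f'(t) ≤ C·t^{r-1} for all t ≥ 0. -/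
/-!
On `[0, ∞)` the ODE forces `0 < f' ≤ 1` and `f f' ≤ 1/√2`, so `f t ≤ t` and `f t ^ 2 ≤ √2 t`.
Writing `f^q = f^(2s-q) (f²)^(q-s)` interpolates these into `f t ^ q ≤ C t ^ s` for
`s ≤ q ≤ 2s`. With `r = max 2 (p/2)` this bounds `f^p` by `t^r`, and, after splitting
`f^(p-1) f' = f^(p-1-c) · (f^c f')` with `f^c f' = (f f')^c f'^(1-c) ≤ 1`, it bounds
`f^(p-1) f'` by `t^(r-1)`; the range of `p` makes `r` subcritical.
-/

open Real Set

lemma div_sqrt_one_add_two_mul_sq_le (x : ℝ) : x / √(1 + 2 * x ^ 2) ≤ 1 / √2 := by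
  rw [div_le_div_iff₀ (by positivity) (by positivity), one_mul]
  refine (le_abs_self _).trans (abs_le_sqrt ?_)
  rw [mul_pow, sq_sqrt zero_le_two]
  linarith

lemma nonneg_of_hasDerivAt_nonneg {g g' : ℝ → ℝ} (h0 : g 0 = 0)
    (hg : ∀ x, 0 ≤ x → HasDerivAt g (g' x) x) (hg' : ∀ x, 0 < x → 0 ≤ g' x)
    {t : ℝ} (ht : 0 ≤ t) : 0 ≤ g t := by
  have hmono : MonotoneOn g (Ici 0) :=
    monotoneOn_of_hasDerivWithinAt_nonneg (convex_Ici 0)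
      (fun x hx => (hg x hx).continuousAt.continuousWithinAt)
      (fun x hx => by
        rw [interior_Ici] at hx
        exact (hg x hx.le).hasDerivWithinAt)
      (fun x hx => by rw [interior_Ici] at hx; exact hg' x hx)
  simpa [h0] using hmono self_mem_Ici ht ht

lemma rpow_le_rpow_mul_rpow_of_sq_le {x t c q s : ℝ} (hx : 0 < x) (hxt : x ≤ t)
    (hx2 : x ^ 2 ≤ c * t) (hsq : s ≤ q) (hqs : q ≤ 2 * s) :
    x ^ q ≤ c ^ (q - s) * t ^ s := by
  have ht : 0 < t := hx.trans_le hxt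
  have hc : 0 < c := by nlinarith
  calc x ^ q = x ^ (2 * s - q) * (x ^ 2 : ℝ) ^ (q - s) := by
        rw [← rpow_natCast x 2, ← rpow_mul hx.le, ← rpow_add hx]
        ring_nf
    _ ≤ t ^ (2 * s - q) * (c * t) ^ (q - s) := by
        gcongr
    _ = c ^ (q - s) * t ^ s := by
        rw [mul_rpow hc.le ht.le, mul_left_comm, ← rpow_add ht]
        ring_nf

lemma rpow_mul_le_one {x y c : ℝ} (hx : 0 ≤ x) (hy : 0 < y) (hxy : x * y ≤ 1) (hy1 : y ≤ 1)
    (hc0 : 0 ≤ c) (hc1 : c ≤ 1) : x ^ c * y ≤ 1 := by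
  have hsplit : x ^ c * y = (x * y) ^ c * y ^ (1 - c) := by
    rw [mul_rpow hx hy.le, mul_assoc, ← rpow_add hy, add_sub_cancel, rpow_one]
  rw [hsplit]
  exact mul_le_one₀ (rpow_le_one (by positivity) hxy hc0) (by positivity)
    (rpow_le_one hy.le hy1 (by linarith))

lemma two_lt_two_mul_add_div {N α : ℝ} (hN : 0 < N) (hα : 0 < α) : 2 < 2 * (N + α) / N := by
  rw [lt_div_iff₀ hN]
  linarith

lemma max_two_half_lt_two_mul_div_sub_two {N α p : ℝ} (hN : 2 < N) (hαN : α < N)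
    (hp : p ≤ 2 * (N + α) / (N - 2)) : max 2 (p / 2) < 2 * N / (N - 2) := by
  have hN2 : 0 < N - 2 := by linarith
  rw [le_div_iff₀ hN2] at hp
  apply max_lt
  · rw [lt_div_iff₀ hN2]; linarith
  · rw [div_lt_div_iff₀ two_pos hN2]; nlinarith

def SolvesDualODE (f : ℝ → ℝ) : Prop :=
  ∀ t, 0 ≤ t → HasDerivAt f (1 / √(1 + 2 * f t ^ 2)) t

namespace SolvesDualODE

variable {f : ℝ → ℝ} {t : ℝ}

lemma deriv_eq (hf : SolvesDualODE f) (ht : 0 ≤ t) : deriv f t = 1 / √(1 + 2 * f t ^ 2) :=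
  (hf t ht).deriv

lemma deriv_pos (hf : SolvesDualODE f) (ht : 0 ≤ t) : 0 < deriv f t := by
  rw [hf.deriv_eq ht]
  positivity

lemma deriv_le_one (hf : SolvesDualODE f) (ht : 0 ≤ t) : deriv f t ≤ 1 := by
  rw [hf.deriv_eq ht]
  exact div_le_one_of_le₀ (one_le_sqrt.2 (by nlinarith)) (sqrt_nonneg _)

lemma mul_deriv_le (hf : SolvesDualODE f) (ht : 0 ≤ t) : f t * deriv f t ≤ 1 / √2 := by
  rw [hf.deriv_eq ht, mul_one_div]
  exact div_sqrt_one_add_two_mul_sq_le _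

lemma pos (hf : SolvesDualODE f) (hf0 : f 0 = 0) (ht : 0 < t) : 0 < f t := by
  have hmono : StrictMonoOn f (Ici 0) :=
    strictMonoOn_of_hasDerivWithinAt_pos (convex_Ici 0)
      (fun x hx => (hf x hx).continuousAt.continuousWithinAt)
      (fun x hx => by
        rw [interior_Ici] at hx
        exact (hf x hx.le).hasDerivWithinAt)
      (fun x hx => by rw [interior_Ici] at hx; positivity)
  simpa [hf0] using hmono self_mem_Ici ht.le ht

lemma le_self (hf : SolvesDualODE f) (hf0 : f 0 = 0) (ht : 0 ≤ t) : f t ≤ t := by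
  have := nonneg_of_hasDerivAt_nonneg (g := fun x => x - f x) (by simp [hf0])
    (fun x hx => (hasDerivAt_id x).sub (hf x hx))
    (fun x hx => by simpa [← hf.deriv_eq hx.le] using hf.deriv_le_one hx.le) ht
  linarith

lemma sq_le (hf : SolvesDualODE f) (hf0 : f 0 = 0) (ht : 0 ≤ t) : f t ^ 2 ≤ √2 * t := by
  have := nonneg_of_hasDerivAt_nonneg (g := fun x => √2 * x - f x ^ 2) (by simp [hf0])
    (fun x hx => ((hasDerivAt_id x).const_mul √2).sub ((hf x hx).pow 2))
    (fun x hx => by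
      have hfd := hf.mul_deriv_le hx.le
      rw [hf.deriv_eq hx.le] at hfd
      have h2 : 2 * (1 / √2) = √2 := by rw [mul_one_div, div_sqrt]
      simp only [Nat.cast_ofNat, mul_one]
      nlinarith) ht
  linarith

lemma rpow_le (hf : SolvesDualODE f) (hf0 : f 0 = 0) {p r : ℝ} (hrp : r ≤ p) (hpr : p ≤ 2 * r)
    (ht : 0 < t) : f t ^ p ≤ √2 ^ (p - r) * t ^ r :=
  rpow_le_rpow_mul_rpow_of_sq_le (hf.pos hf0 ht) (hf.le_self hf0 ht.le) (hf.sq_le hf0 ht.le)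
    hrp hpr

lemma rpow_sub_two_mul_self_mul_deriv_le (hf : SolvesDualODE f) (hf0 : f 0 = 0) {p r : ℝ}
    (hr : 1 ≤ r) (hrp : r ≤ p) (hpr : p ≤ 2 * r) (ht : 0 < t) :
    f t ^ (p - 2) * f t * deriv f t ≤ √2 ^ (p - r) * t ^ (r - 1) := by
  have hft := hf.pos hf0 ht
  have hd := hf.deriv_pos ht.le
  -- `c ∈ [0, 1]` with `r - 1 ≤ p - 1 - c ≤ 2 (r - 1)`
  set c := min 1 (p - r)
  have hc0 : 0 ≤ c := le_min zero_le_one (by linarith)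
  have hc : p + 1 - 2 * r ≤ c := le_min (by linarith) (by linarith)
  have hcf : f t ^ c * deriv f t ≤ 1 :=
    rpow_mul_le_one hft.le hd ((hf.mul_deriv_le ht.le).trans
      (div_le_one_of_le₀ (one_le_sqrt.2 one_le_two) (sqrt_nonneg 2)))
      (hf.deriv_le_one ht.le) hc0 (min_le_left _ _)
  have hsplit : f t ^ (p - 2) * f t * deriv f t = f t ^ (p - 1 - c) * (f t ^ c * deriv f t) := by
    rw [← mul_assoc, ← rpow_add hft, ← rpow_add_one hft.ne']
    ring_nf
  calc f t ^ (p - 2) * f t * deriv f t ≤ f t ^ (p - 1 - c) := by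
        rw [hsplit]
        exact mul_le_of_le_one_right (by positivity) hcf
    _ ≤ √2 ^ (p - 1 - c - (r - 1)) * t ^ (r - 1) :=
        rpow_le_rpow_mul_rpow_of_sq_le hft (hf.le_self hf0 ht.le) (hf.sq_le hf0 ht.le)
          (by linarith [min_le_right 1 (p - r)]) (by linarith)
    _ ≤ √2 ^ (p - r) * t ^ (r - 1) := by
        gcongr √2 ^ ?_ * _
        exacts [one_le_sqrt.2 one_le_two, by linarith]

end SolvesDualODE

theorem stmt_9_general (f : ℝ → ℝ) (hf0 : f 0 = 0)
    (hderiv : ∀ t : ℝ, 0 ≤ t → HasDerivAt f (1 / Real.sqrt (1 + 2 * f t ^ 2)) t)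
    (N : ℕ) (hN : 3 ≤ N) (α p : ℝ) (hα : 0 < α) (hαN : α < (N : ℝ))
    (hp1 : 2 * ((N : ℝ) + α) / N ≤ p) (hp2 : p ≤ 2 * ((N : ℝ) + α) / ((N : ℝ) - 2)) :
    ∃ C : ℝ, 0 < C ∧ ∃ r : ℝ, r ∈ Set.Ico (2 : ℝ) (2 * (N : ℝ) / ((N : ℝ) - 2)) ∧
      ∀ t : ℝ, 0 ≤ t →
        |f t| ^ p ≤ C * t ^ r ∧
        |f t| ^ (p - 2) * f t * deriv f t ≤ C * t ^ (r - 1) := by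
  have hf : SolvesDualODE f := hderiv
  have hN3 : (3 : ℝ) ≤ N := by exact_mod_cast hN
  have hp : 2 < p := (two_lt_two_mul_add_div (by linarith) hα).trans_le hp1
  set r := max 2 (p / 2)
  have hr2 : 2 ≤ r := le_max_left _ _
  have hrp : r ≤ p := max_le hp.le (by linarith)
  have hpr : p ≤ 2 * r := by linarith [le_max_right 2 (p / 2)]
  refine ⟨√2 ^ (p - r), by positivity, r,
    ⟨hr2, max_two_half_lt_two_mul_div_sub_two (by linarith) hαN hp2⟩, fun t ht => ?_⟩
  rcases ht.eq_or_lt with rfl | ht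
  · simp only [hf0, abs_zero, zero_rpow (by linarith : p ≠ 0), mul_zero, zero_mul]
    constructor <;> positivity
  · rw [abs_of_pos (hf.pos hf0 ht)]
    exact ⟨hf.rpow_le hf0 hrp hpr ht,
      hf.rpow_sub_two_mul_self_mul_deriv_le hf0 (by linarith) hrp hpr ht⟩

theorem stmt_9 (f : ℝ → ℝ) (hf0 : f 0 = 0)
    (hodd : ∀ t : ℝ, f (-t) = -f t)
    (hderiv : ∀ t : ℝ, 0 ≤ t → HasDerivAt f (1 / Real.sqrt (1 + 2 * f t ^ 2)) t)
    (N : ℕ) (hN : 3 ≤ N) (α p : ℝ) (hα : 0 < α) (hαN : α < (N : ℝ))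
    (hp1 : 2 * ((N : ℝ) + α) / N ≤ p) (hp2 : p ≤ 2 * ((N : ℝ) + α) / ((N : ℝ) - 2)) :
    ∃ C : ℝ, 0 < C ∧ ∃ r : ℝ, r ∈ Set.Ico (2 : ℝ) (2 * (N : ℝ) / ((N : ℝ) - 2)) ∧
      ∀ t : ℝ, 0 ≤ t →
        |f t| ^ p ≤ C * t ^ r ∧
        |f t| ^ (p - 2) * f t * deriv f t ≤ C * t ^ (r - 1) :=
  stmt_9_general f hf0 hderiv N hN α p hα hαN hp1 hp2
end

section
/- Let f satisfy f'(t) = 1/√(1+2f(t)²), f(0)=0 (odd extension), and let v ∈ H¹(ℝ^N), N ≥ 3. Set w = f(v)/f'(v) = f(v)·√(1+2f(v)²). Then ∫|w|² ≤ 4∫|v|² and ∫|∇w|² ≤ 4∫|∇v|², so w ∈ H¹(ℝ^N) with ‖w‖_{H¹} ≤ 2‖v‖_{H¹}. -/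
/-!
Write `w = g ∘ v` with `g = f · √(1 + 2 f²)`. From `f' = (1 + 2 f²)^{-1/2}` one computes
`g' = 1 + 2 f² / (1 + 2 f²) ∈ [1, 2]`, so `g` is `2`-Lipschitz with `g 0 = 0`. Hence
`|w| ≤ 2 |v|` and, by the chain rule, `‖∇w‖ ≤ 2 ‖∇v‖` pointwise; squaring and integrating gives
both `L²` bounds, and adding them gives the `H¹` bound.
-/

open MeasureTheory

theorem abs_le_mul_abs_of_hasDerivAt {g g' : ℝ → ℝ} {C : ℝ} (hg : ∀ t, HasDerivAt g (g' t) t)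
    (hC : ∀ t, |g' t| ≤ C) (hg0 : g 0 = 0) (t : ℝ) : |g t| ≤ C * |t| := by
  simpa [hg0] using convex_univ.norm_image_sub_le_of_norm_hasDerivWithin_le
    (fun s _ => (hg s).hasDerivWithinAt) (fun s _ => hC s) (Set.mem_univ 0) (Set.mem_univ t)

theorem norm_fderiv_comp_le {E : Type*} [NormedAddCommGroup E] [NormedSpace ℝ E]
    {g g' : ℝ → ℝ} {C : ℝ} (hg : ∀ t, HasDerivAt g (g' t) t) (hC : ∀ t, |g' t| ≤ C)
    {v : E → ℝ} {x : E} (hv : DifferentiableAt ℝ v x) :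
    ‖fderiv ℝ (g ∘ v) x‖ ≤ C * ‖fderiv ℝ v x‖ := by
  rw [((hg (v x)).comp_hasFDerivAt x hv.hasFDerivAt).fderiv, norm_smul, Real.norm_eq_abs]
  exact mul_le_mul_of_nonneg_right (hC _) (norm_nonneg _)

theorem integral_norm_sq_le_of_norm_le_mul {α E F : Type*} [MeasurableSpace α] {μ : Measure α}
    [NormedAddCommGroup E] [NormedAddCommGroup F] {u : α → E} {v : α → F} {C : ℝ}
    (hv : MemLp v 2 μ) (huv : ∀ x, ‖u x‖ ≤ C * ‖v x‖) :
    ∫ x, ‖u x‖ ^ 2 ∂μ ≤ C ^ 2 * ∫ x, ‖v x‖ ^ 2 ∂μ := by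
  rw [← integral_const_mul]
  refine integral_mono_of_nonneg (.of_forall fun x => sq_nonneg _)
    ((hv.integrable_norm_pow two_ne_zero).const_mul _) (.of_forall fun x => ?_)
  calc ‖u x‖ ^ 2 ≤ (C * ‖v x‖) ^ 2 := pow_le_pow_left₀ (norm_nonneg _) (huv x) 2
    _ = C ^ 2 * ‖v x‖ ^ 2 := mul_pow _ _ _

theorem hasDerivAt_mul_sqrt_one_add_two_sq {f : ℝ → ℝ}
    (hf : ∀ t, HasDerivAt f (1 / Real.sqrt (1 + 2 * f t ^ 2)) t) (t : ℝ) :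
    HasDerivAt (fun s => f s * Real.sqrt (1 + 2 * f s ^ 2))
      (1 + 2 * f t ^ 2 / (1 + 2 * f t ^ 2)) t := by
  have hpos : 0 < 1 + 2 * f t ^ 2 := by positivity
  have hsqrt := (((hf t).fun_pow 2).const_mul 2).const_add 1 |>.sqrt hpos.ne'
  refine ((hf t).fun_mul hsqrt).congr_deriv ?_
  field_simp
  rw [Real.sq_sqrt hpos.le]
  push_cast
  ring

theorem abs_one_add_two_sq_div_le_two (a : ℝ) : |1 + 2 * a ^ 2 / (1 + 2 * a ^ 2)| ≤ 2 := by
  have hpos : 0 < 1 + 2 * a ^ 2 := by positivity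
  have hle : 2 * a ^ 2 / (1 + 2 * a ^ 2) ≤ 1 := (div_le_one hpos).2 (by linarith)
  rw [abs_of_nonneg (by positivity)]
  linarith

theorem stmt_15_general (f : ℝ → ℝ) (hf0 : f 0 = 0)
    (hderiv : ∀ t : ℝ, HasDerivAt f (1 / Real.sqrt (1 + 2 * f t ^ 2)) t)
    (N : ℕ)
    (v : EuclideanSpace ℝ (Fin N) → ℝ) (hv : Differentiable ℝ v)
    (hv2 : MemLp v 2 volume)
    (hvg : MemLp (fun x => ‖fderiv ℝ v x‖) 2 volume)
    (w : EuclideanSpace ℝ (Fin N) → ℝ)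
    (hw : ∀ x, w x = f (v x) * Real.sqrt (1 + 2 * f (v x) ^ 2)) :
    (∫ x, w x ^ 2) ≤ 4 * (∫ x, v x ^ 2) ∧
    (∫ x, ‖fderiv ℝ w x‖ ^ 2) ≤ 4 * (∫ x, ‖fderiv ℝ v x‖ ^ 2) ∧
    MemLp w 2 volume ∧ MemLp (fun x => ‖fderiv ℝ w x‖) 2 volume ∧
    Real.sqrt ((∫ x, w x ^ 2) + ∫ x, ‖fderiv ℝ w x‖ ^ 2) ≤
      2 * Real.sqrt ((∫ x, v x ^ 2) + ∫ x, ‖fderiv ℝ v x‖ ^ 2) := by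
  have hg := hasDerivAt_mul_sqrt_one_add_two_sq hderiv
  have hg' (t : ℝ) := abs_one_add_two_sq_div_le_two (f t)
  have hwv : w = (fun t => f t * Real.sqrt (1 + 2 * f t ^ 2)) ∘ v := funext hw
  have hval (x) : ‖w x‖ ≤ 2 * ‖v x‖ := by
    simpa [hw] using abs_le_mul_abs_of_hasDerivAt hg hg' (by simp [hf0]) (v x)
  have hgrad (x) : ‖‖fderiv ℝ w x‖‖ ≤ 2 * ‖‖fderiv ℝ v x‖‖ := by
    simpa only [norm_norm, hwv] using norm_fderiv_comp_le hg hg' (hv x)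
  have hw_cont : Continuous w :=
    hwv ▸ (continuous_iff_continuousAt.2 fun t => (hg t).continuousAt).comp hv.continuous
  have hval_int := integral_norm_sq_le_of_norm_le_mul hv2 hval
  have hgrad_int := integral_norm_sq_le_of_norm_le_mul hvg hgrad
  simp only [Real.norm_eq_abs, sq_abs] at hval_int hgrad_int
  norm_num at hval_int hgrad_int
  refine ⟨hval_int, hgrad_int, hv2.of_le_mul hw_cont.aestronglyMeasurable (.of_forall hval),
    hvg.of_le_mul (measurable_fderiv ℝ w).norm.aestronglyMeasurable (.of_forall hgrad), ?_⟩
  have hv_nonneg : 0 ≤ ∫ x, v x ^ 2 := integral_nonneg fun x => sq_nonneg _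
  have hgrad_nonneg : 0 ≤ ∫ x, ‖fderiv ℝ v x‖ ^ 2 := integral_nonneg fun x => sq_nonneg _
  rw [Real.sqrt_le_left (by positivity), mul_pow, Real.sq_sqrt (by positivity)]
  linarith

theorem stmt_15 (f : ℝ → ℝ) (hf0 : f 0 = 0)
    (hodd : ∀ t : ℝ, f (-t) = -f t)
    (hderiv : ∀ t : ℝ, HasDerivAt f (1 / Real.sqrt (1 + 2 * f t ^ 2)) t)
    (N : ℕ) (hN : 3 ≤ N)
    (v : EuclideanSpace ℝ (Fin N) → ℝ) (hv : Differentiable ℝ v)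
    (hv2 : MemLp v 2 volume)
    (hvg : MemLp (fun x => ‖fderiv ℝ v x‖) 2 volume)
    (w : EuclideanSpace ℝ (Fin N) → ℝ)
    (hw : ∀ x, w x = f (v x) * Real.sqrt (1 + 2 * f (v x) ^ 2)) :
    (∫ x, w x ^ 2) ≤ 4 * (∫ x, v x ^ 2) ∧
    (∫ x, ‖fderiv ℝ w x‖ ^ 2) ≤ 4 * (∫ x, ‖fderiv ℝ v x‖ ^ 2) ∧
    MemLp w 2 volume ∧ MemLp (fun x => ‖fderiv ℝ w x‖) 2 volume ∧
    Real.sqrt ((∫ x, w x ^ 2) + ∫ x, ‖fderiv ℝ w x‖ ^ 2) ≤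
      2 * Real.sqrt ((∫ x, v x ^ 2) + ∫ x, ‖fderiv ℝ v x‖ ^ 2) :=
  stmt_15_general f hf0 hderiv N v hv hv2 hvg w hw
end
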